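/- arXiv:2208.07456 — 3 statements merged into one kernel-verified Lean document; each statement's English description precedes it below -/
import Mathlib

section
/- Let A be a real symmetric positive-definite m×m matrix and Λ∞ ∈ ℝ. Then the inequality ⟨Aξ,ξ⟩ − Λ∞²·⟨Aω,ω⟩·(⟨ξ,ω⟩)² ≥ 0 holds for all ξ, ω ∈ ℝᵐ with |ω| = 1 if and only if Λ∞²·(μ₁ + μ_m)² ≤ 4·μ₁·μ_m, where μ₁ and μ_m are the smallest and largest eigenvalues of A. -/
/-- Euclidean inner product on ℝᵐ. -/
noncomputable def dotR {m : ℕ} (x y : Fin m → ℝ) : ℝ := ∑ i, x i * y i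

/-!
In an orthonormal eigenbasis of `A` the form becomes `∑ μᵢ xᵢ² - Λ² (∑ μᵢ yᵢ²) (∑ xᵢ yᵢ)²`.
For fixed `y`, the weighted Cauchy–Schwarz inequality `(∑ xᵢ yᵢ)² ≤ (∑ μᵢ xᵢ²)(∑ yᵢ²/μᵢ)`, with
equality at `x = y/μ`, shows that it is nonnegative for all `x` iff `Λ² P Q ≤ 1`, where
`P = ∑ μᵢ yᵢ² = dotR (μ * y) y` and `Q = ∑ yᵢ²/μᵢ = dotR (μ⁻¹ * y) y`. By the Kantorovich
inequality the supremum of `P Q` over unit vectors `y` is `(μ₁ + μₘ)² / (4 μ₁ μₘ)`,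
attained at `y = (e₁ + eₘ)/√2`.
-/

open Matrix

section

variable {m : ℕ}

lemma dotR_eq_dotProduct (x y : Fin m → ℝ) : dotR x y = x ⬝ᵥ y := rfl

lemma dotR_comm (x y : Fin m → ℝ) : dotR x y = dotR y x := dotProduct_comm x y

section Diagonal

variable {μ : Fin m → ℝ}

lemma dotR_mul_self_nonneg (hμ : ∀ i, 0 ≤ μ i) (x : Fin m → ℝ) : 0 ≤ dotR (μ * x) x :=
  Finset.sum_nonneg fun i _ => by
    simpa only [Pi.mul_apply, mul_assoc] using mul_nonneg (hμ i) (mul_self_nonneg (x i))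

lemma dotR_sq_le_mul (hμ : ∀ i, 0 < μ i) (x y : Fin m → ℝ) :
    dotR x y ^ 2 ≤ dotR (μ * x) x * dotR (μ⁻¹ * y) y := by
  refine Finset.sum_sq_le_sum_mul_sum_of_sq_le_mul _ (fun i _ => ?_) (fun i _ => ?_)
    fun i _ => ?_
  · simpa only [Pi.mul_apply, mul_assoc] using mul_nonneg (hμ i).le (mul_self_nonneg (x i))
  · simpa only [Pi.mul_apply, Pi.inv_apply, mul_assoc] using
      mul_nonneg (inv_nonneg.2 (hμ i).le) (mul_self_nonneg (y i))
  · have := (hμ i).ne'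
    simp only [Pi.mul_apply, Pi.inv_apply]
    field_simp
    rfl

lemma forall_mul_dotR_sq_le_iff (hμ : ∀ i, 0 < μ i) (Λ : ℝ) (y : Fin m → ℝ) :
    (∀ x, Λ ^ 2 * dotR (μ * y) y * dotR x y ^ 2 ≤ dotR (μ * x) x) ↔
      Λ ^ 2 * dotR (μ * y) y * dotR (μ⁻¹ * y) y ≤ 1 := by
  have hP : 0 ≤ Λ ^ 2 * dotR (μ * y) y :=
    mul_nonneg (sq_nonneg Λ) (dotR_mul_self_nonneg (fun i => (hμ i).le) y)
  have hQ : 0 ≤ dotR (μ⁻¹ * y) y := dotR_mul_self_nonneg (fun i => inv_nonneg.2 (hμ i).le) y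
  constructor
  · intro H
    have hμμ : μ * μ⁻¹ = 1 := funext fun i => mul_inv_cancel₀ (hμ i).ne'
    have hQ_sq := H (μ⁻¹ * y)
    rw [← mul_assoc, hμμ, one_mul, dotR_comm y] at hQ_sq
    rcases hQ.eq_or_lt with hQ0 | hQ0
    · rw [← hQ0, mul_zero]
      exact zero_le_one
    · nlinarith
  · intro H x
    calc Λ ^ 2 * dotR (μ * y) y * dotR x y ^ 2
        ≤ Λ ^ 2 * dotR (μ * y) y * (dotR (μ * x) x * dotR (μ⁻¹ * y) y) :=
          mul_le_mul_of_nonneg_left (dotR_sq_le_mul hμ x y) hP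
      _ = Λ ^ 2 * dotR (μ * y) y * dotR (μ⁻¹ * y) y * dotR (μ * x) x := by ring
      _ ≤ dotR (μ * x) x :=
          mul_le_of_le_one_left (dotR_mul_self_nonneg (fun i => (hμ i).le) x) H

lemma add_mul_inv_le_add {a b t : ℝ} (ha : 0 < a) (ht : t ∈ Set.Icc a b) :
    t + a * b * t⁻¹ ≤ a + b := by
  have ht0 : 0 < t := ha.trans_le ht.1
  have key : a + b - (t + a * b * t⁻¹) = (t - a) * (b - t) / t := by field_simp; ring
  have : 0 ≤ (t - a) * (b - t) / t :=
    div_nonneg (mul_nonneg (sub_nonneg.2 ht.1) (sub_nonneg.2 ht.2)) ht0.le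
  linarith

theorem kantorovich {a b : ℝ} (ha : 0 < a) (hab : a ≤ b) (hμ : ∀ i, μ i ∈ Set.Icc a b)
    (y : Fin m → ℝ) :
    4 * a * b * (dotR (μ * y) y * dotR (μ⁻¹ * y) y) ≤ (a + b) ^ 2 * dotR y y ^ 2 := by
  have hsum : dotR (μ * y) y + a * b * dotR (μ⁻¹ * y) y ≤ (a + b) * dotR y y := by
    simp only [dotR, Finset.mul_sum, ← Finset.sum_add_distrib]
    refine Finset.sum_le_sum fun i _ => ?_
    calc μ i * y i * y i + a * b * ((μ i)⁻¹ * y i * y i)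
        = (μ i + a * b * (μ i)⁻¹) * (y i * y i) := by ring
      _ ≤ (a + b) * (y i * y i) :=
          mul_le_mul_of_nonneg_right (add_mul_inv_le_add ha (hμ i)) (mul_self_nonneg _)
  have hab_nonneg : 0 ≤ a * b := mul_nonneg ha.le (ha.le.trans hab)
  have hP := dotR_mul_self_nonneg (fun i => ha.le.trans (hμ i).1) y
  have hQ := dotR_mul_self_nonneg (fun i => inv_nonneg.2 (ha.le.trans (hμ i).1)) y
  calc 4 * a * b * (dotR (μ * y) y * dotR (μ⁻¹ * y) y)
      ≤ (dotR (μ * y) y + a * b * dotR (μ⁻¹ * y) y) ^ 2 := by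
        nlinarith [sq_nonneg (dotR (μ * y) y - a * b * dotR (μ⁻¹ * y) y)]
    _ ≤ ((a + b) * dotR y y) ^ 2 := pow_le_pow_left₀ (by positivity) hsum 2
    _ = (a + b) ^ 2 * dotR y y ^ 2 := mul_pow _ _ _

lemma dotR_mul_single (f : Fin m → ℝ) (i : Fin m) (c : ℝ) :
    dotR (f * Pi.single i c) (Pi.single i c) = f i * c ^ 2 := by
  simp [dotR, Pi.single_apply, sq, mul_assoc]

lemma dotR_mul_single_add_single (f : Fin m → ℝ) {i j : Fin m} (hij : i ≠ j) (c : ℝ) :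
    dotR (f * (Pi.single i c + Pi.single j c)) (Pi.single i c + Pi.single j c) =
      (f i + f j) * c ^ 2 := by
  rw [dotR, Fintype.sum_eq_add i j hij]
  · simp [hij, hij.symm]
    ring
  · rintro k ⟨hki, hkj⟩
    simp [hki, hkj]

lemma exists_dotR_self_eq_one_kantorovich_eq {i j : Fin m} (hi : 0 < μ i) (hj : 0 < μ j) :
    ∃ y, dotR y y = 1 ∧
      4 * μ i * μ j * (dotR (μ * y) y * dotR (μ⁻¹ * y) y) = (μ i + μ j) ^ 2 := by
  obtain rfl | hij := eq_or_ne i j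
  · refine ⟨Pi.single i 1, by simpa using dotR_mul_single 1 i 1, ?_⟩
    rw [dotR_mul_single, dotR_mul_single, Pi.inv_apply]
    field_simp
    ring
  · set c := (√2)⁻¹
    have hc : c ^ 2 = 1 / 2 := by simp [c, inv_pow]
    refine ⟨Pi.single i c + Pi.single j c, ?_, ?_⟩
    · simpa [hc, one_add_one_eq_two] using dotR_mul_single_add_single 1 hij c
    · rw [dotR_mul_single_add_single _ hij, dotR_mul_single_add_single _ hij, hc]
      simp only [Pi.inv_apply]
      field_simp
      ring

theorem forall_dotR_mul_sub_nonneg_iff {i j : Fin m} (hi : 0 < μ i) (hmin : ∀ k, μ i ≤ μ k)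
    (hmax : ∀ k, μ k ≤ μ j) (Λ : ℝ) :
    (∀ x y : Fin m → ℝ, dotR y y = 1 →
        dotR (μ * x) x - Λ ^ 2 * dotR (μ * y) y * dotR x y ^ 2 ≥ 0) ↔
      Λ ^ 2 * (μ i + μ j) ^ 2 ≤ 4 * μ i * μ j := by
  have hμ k : 0 < μ k := hi.trans_le (hmin k)
  have h4 : 0 < 4 * μ i * μ j := by have := hμ j; positivity
  simp only [ge_iff_le, sub_nonneg]
  constructor
  · intro H
    obtain ⟨y, hy, hPQ⟩ := exists_dotR_self_eq_one_kantorovich_eq hi (hμ j)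
    have hle := (forall_mul_dotR_sq_le_iff hμ Λ y).1 fun x => H x y hy
    calc Λ ^ 2 * (μ i + μ j) ^ 2
        = 4 * μ i * μ j * (Λ ^ 2 * dotR (μ * y) y * dotR (μ⁻¹ * y) y) := by rw [← hPQ]; ring
      _ ≤ 4 * μ i * μ j * 1 := mul_le_mul_of_nonneg_left hle h4.le
      _ = 4 * μ i * μ j := mul_one _
  · intro H x y hy
    refine (forall_mul_dotR_sq_le_iff hμ Λ y).2 (le_of_mul_le_mul_left ?_ h4) x
    have hK := kantorovich hi (hmin j) (fun k => ⟨hmin k, hmax k⟩) y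
    rw [hy] at hK
    calc 4 * μ i * μ j * (Λ ^ 2 * dotR (μ * y) y * dotR (μ⁻¹ * y) y)
        = Λ ^ 2 * (4 * μ i * μ j * (dotR (μ * y) y * dotR (μ⁻¹ * y) y)) := by ring
      _ ≤ Λ ^ 2 * ((μ i + μ j) ^ 2 * 1 ^ 2) := mul_le_mul_of_nonneg_left hK (sq_nonneg Λ)
      _ ≤ 4 * μ i * μ j * 1 := by linarith

end Diagonal

lemma dotR_mulVec_conj (U M : Matrix (Fin m) (Fin m) ℝ) (x y : Fin m → ℝ) :
    dotR (U *ᵥ x) (M *ᵥ (U *ᵥ y)) = dotR x ((Uᵀ * M * U) *ᵥ y) := by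
  simp only [dotR_eq_dotProduct, dotProduct_mulVec, vecMul_mulVec, mulVec_mulVec,
    Matrix.mul_assoc]

lemma dotR_mulVec_mulVec {U : Matrix (Fin m) (Fin m) ℝ} (hU : U ∈ orthogonalGroup (Fin m) ℝ)
    (x y : Fin m → ℝ) : dotR (U *ᵥ x) (U *ᵥ y) = dotR x y := by
  simpa [(mem_orthogonalGroup_iff' ..).1 hU] using dotR_mulVec_conj U 1 x y

lemma dotR_mulVec_eigenvectorUnitary {A : Matrix (Fin m) (Fin m) ℝ} (hA : A.IsHermitian)
    (x : Fin m → ℝ) :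
    dotR (A *ᵥ (hA.eigenvectorUnitary *ᵥ x)) (hA.eigenvectorUnitary *ᵥ x) =
      dotR (hA.eigenvalues * x) x := by
  have hdiag := hA.conjStarAlgAut_star_eigenvectorUnitary
  rw [Unitary.conjStarAlgAut_star_apply, star_eq_conjTranspose,
    conjTranspose_eq_transpose_of_trivial] at hdiag
  rw [dotR_comm, dotR_mulVec_conj, hdiag, dotR_comm]
  simp [dotR_eq_dotProduct, mulVec_diagonal, dotProduct]

end

theorem stmt_4 (m : ℕ) (A : Matrix (Fin m) (Fin m) ℝ) (hA : A.IsHermitian)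
    (hpd : ∀ ξ : Fin m → ℝ, ξ ≠ 0 → 0 < dotR (A.mulVec ξ) ξ)
    (Λinf μ1 μm : ℝ)
    (h1 : ∀ i, μ1 ≤ hA.eigenvalues i) (hmax : ∀ i, hA.eigenvalues i ≤ μm)
    (e1 : ∃ i, hA.eigenvalues i = μ1) (em : ∃ i, hA.eigenvalues i = μm) :
    (∀ ξ ω : Fin m → ℝ, dotR ω ω = 1 →
        dotR (A.mulVec ξ) ξ - Λinf ^ 2 * dotR (A.mulVec ω) ω * (dotR ξ ω) ^ 2 ≥ 0)
      ↔ Λinf ^ 2 * (μ1 + μm) ^ 2 ≤ 4 * μ1 * μm := by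
  obtain ⟨i1, rfl⟩ := e1
  obtain ⟨im, rfl⟩ := em
  have hA_pos : A.PosDef := PosDef.of_dotProduct_mulVec_pos hA fun ξ hξ => by
    rw [star_trivial, dotProduct_comm]
    exact hpd ξ hξ
  have hU := hA.eigenvectorUnitary.2
  rw [← forall_dotR_mul_sub_nonneg_iff (hA_pos.eigenvalues_pos i1) h1 hmax,
    (mulVec_surjective_iff_isUnit.2 (Unitary.isUnit_coe (U := hA.eigenvectorUnitary))).forall₂]
  simp only [dotR_mulVec_eigenvectorUnitary, dotR_mulVec_mulVec hU]
end

section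
/- Let μ₁ ≤ μ_m be real numbers, Λ∞ ∈ ℝ with 0 ≤ Λ∞² < 1, and κ' > 0. Suppose that for all 0 < κ < κ', one has μ₁ − κ > 0, μ_m − κ > 0, and Λ∞²·(μ₁ + μ_m − 2κ)² ≤ 4·(μ₁ − κ)·(μ_m − κ). Then κ' ≤ (1/2)·[(1 + 1/√(1 − Λ∞²))·μ₁ + (1 − 1/√(1 − Λ∞²))·μ_m]. -/
theorem stmt_7 (μ1 μm Λinf κ' : ℝ) (hμ : μ1 ≤ μm) (hΛ : Λinf ^ 2 < 1)
    (hκ' : 0 < κ')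
    (h : ∀ κ : ℝ, 0 < κ → κ < κ' →
      0 < μ1 - κ ∧ 0 < μm - κ ∧
      Λinf ^ 2 * (μ1 + μm - 2 * κ) ^ 2 ≤ 4 * (μ1 - κ) * (μm - κ)) :
    κ' ≤ (1 / 2) * ((1 + 1 / Real.sqrt (1 - Λinf ^ 2)) * μ1
      + (1 - 1 / Real.sqrt (1 - Λinf ^ 2)) * μm) := by
  set s := Real.sqrt (1 - Λinf ^ 2) with hsdef
  have hs : 0 < s := Real.sqrt_pos.mpr (by linarith)
  have hs2 : s ^ 2 = 1 - Λinf ^ 2 := Real.sq_sqrt (by linarith)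
  set B := (1 / 2) * ((1 + 1 / s) * μ1 + (1 - 1 / s) * μm) with hBdef
  have key : ∀ κ : ℝ, 0 < κ → κ < κ' → κ ≤ B := by
    intro κ hκ0 hκκ'
    obtain ⟨h1, h2, h3⟩ := h κ hκ0 hκκ'
    have hM : 0 < μ1 + μm - 2 * κ := by linarith
    have hkey : (μm - μ1) ^ 2 ≤ (s * (μ1 + μm - 2 * κ)) ^ 2 := by nlinarith
    have hle : μm - μ1 ≤ s * (μ1 + μm - 2 * κ) := by
      nlinarith [mul_pos hs hM]
    have hB : B = ((μ1 + μm) * s - (μm - μ1)) / (2 * s) := by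
      rw [hBdef]; field_simp; ring
    rw [hB, le_div_iff₀ (by positivity)]
    nlinarith
  by_contra hcon
  push_neg at hcon
  have hB0 : 0 < B := lt_of_lt_of_le (by linarith) (key (κ' / 2) (by linarith) (by linarith))
  have := key ((B + κ') / 2) (by linarith) (by linarith)
  linarith
end

section
/- Let μ₁ ≤ μ_m be real numbers and Λ∞ ∈ ℝ with 0 ≤ Λ∞² < 1. If 0 < κ < (1/2)·[(1 + 1/√(1 − Λ∞²))·μ₁ + (1 − 1/√(1 − Λ∞²))·μ_m], then μ₁ − κ > 0, μ_m − κ > 0, and Λ∞²·(μ₁ + μ_m − 2κ)² ≤ 4·(μ₁ − κ)·(μ_m − κ). -/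
theorem stmt_8 (μ1 μm Λinf κ : ℝ) (hμ : μ1 ≤ μm) (hΛ : Λinf ^ 2 < 1)
    (hκ : 0 < κ)
    (h : κ < (1 / 2) * ((1 + 1 / Real.sqrt (1 - Λinf ^ 2)) * μ1
      + (1 - 1 / Real.sqrt (1 - Λinf ^ 2)) * μm)) :
    0 < μ1 - κ ∧ 0 < μm - κ ∧
      Λinf ^ 2 * (μ1 + μm - 2 * κ) ^ 2 ≤ 4 * (μ1 - κ) * (μm - κ) := by
  set s := Real.sqrt (1 - Λinf ^ 2) with hsdef
  have hpos : (0:ℝ) < 1 - Λinf ^ 2 := by nlinarith [sq_nonneg Λinf]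
  have hs : 0 < s := Real.sqrt_pos.mpr hpos
  have hs2 : s ^ 2 = 1 - Λinf ^ 2 := Real.sq_sqrt (le_of_lt hpos)
  have hs1 : s ≤ 1 := by nlinarith [sq_nonneg Λinf]
  have hd : μm - μ1 < s * ((μ1 - κ) + (μm - κ)) := by
    have hne : s ≠ 0 := ne_of_gt hs
    have hinv : s * (1/s) = 1 := mul_one_div_cancel hne
    nlinarith [mul_lt_mul_of_pos_left h hs, hinv]
  have hsum : 0 < (μ1 - κ) + (μm - κ) := by nlinarith
  have hd' : μm - μ1 < (μ1 - κ) + (μm - κ) := by nlinarith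
  have ha : 0 < μ1 - κ := by nlinarith
  refine ⟨ha, by nlinarith, ?_⟩
  have hdsq : (μm - μ1) * (μm - μ1) < (s * ((μ1 - κ) + (μm - κ))) * (s * ((μ1 - κ) + (μm - κ))) :=
    mul_self_lt_mul_self (by nlinarith) hd
  nlinarith [hdsq, hs2]
end
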